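/- Let n ≥ 1 be an integer and β ∈ ℝ \ {n+4, n+6, n+8, …}. For δ > 0 let m_δ(r) = −r² ₂F₃(1, (n+2−β)/2; 2, (n+2)/2, (n+4−β)/2; −r²δ²/4). Then for every fixed r ∈ ℝ, lim_{δ→0⁺} m_δ(r) = −r²; that is, the multipliers of the nonlocal Laplacian converge pointwise to those of the classical Laplacian as the nonlocality parameter δ tends to zero. -/
import Mathlib


open Filter
open scoped Topology

/-- The rising Pochhammer symbol `(q)_k = q (q+1) ⋯ (q+k-1)`. -/
noncomputable def poch (q : ℝ) (k : ℕ) : ℝ := (ascPochhammer ℝ k).eval q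

/-- The generalized hypergeometric series `₂F₃(a₁,a₂; b₁,b₂,b₃; x)`. -/
noncomputable def hyp2F3 (a₁ a₂ b₁ b₂ b₃ x : ℝ) : ℝ :=
  ∑' k : ℕ, (poch a₁ k * poch a₂ k) /
    (poch b₁ k * poch b₂ k * poch b₃ k * (Nat.factorial k : ℝ)) * x ^ k

/-- The extended Fourier multiplier of the nonlocal Laplacian, as a function of `r = ‖ν‖`. -/
noncomputable def multiplier (n : ℕ) (δ β r : ℝ) : ℝ :=
  -r ^ 2 * hyp2F3 1 (((n : ℝ) + 2 - β) / 2) 2 (((n : ℝ) + 2) / 2)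
    (((n : ℝ) + 4 - β) / 2) (-(r ^ 2 * δ ^ 2) / 4)


lemma poch_zero (q : ℝ) : poch q 0 = 1 := by simp [poch]

lemma poch_succ (q : ℝ) (k : ℕ) : poch q (k + 1) = poch q k * (q + k) := by
  simp [poch, ascPochhammer_succ_right]

lemma poch_ge_factorial {q : ℝ} (hq : 1 ≤ q) : ∀ k, (k.factorial : ℝ) ≤ poch q k := by
  intro k
  induction k with
  | zero => simp [poch_zero]
  | succ k ih =>
      rw [poch_succ]
      have h1 : (0:ℝ) < (k.factorial : ℝ) := by positivity
      have : ((k+1).factorial : ℝ) = (k.factorial : ℝ) * (1 + k) := by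
        push_cast [Nat.factorial_succ]; ring
      rw [this]
      have hqk : (1:ℝ) + k ≤ q + k := by linarith
      nlinarith [ih]

lemma poch_one_eq (k : ℕ) : poch 1 k = (k.factorial : ℝ) := by
  induction k with
  | zero => simp [poch_zero]
  | succ k ih => rw [poch_succ, ih]; push_cast [Nat.factorial_succ]; ring

lemma abs_poch_le (q : ℝ) : ∀ k, |poch q k| ≤ (|q| + 1) ^ k * (k.factorial : ℝ) := by
  intro k
  induction k with
  | zero => simp [poch_zero]
  | succ k ih =>
      rw [poch_succ, abs_mul]
      have h1 : |q + (k:ℝ)| ≤ |q| + k := by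
        calc |q + (k:ℝ)| ≤ |q| + |(k:ℝ)| := abs_add_le _ _
        _ = |q| + k := by rw [abs_of_nonneg (by positivity : (0:ℝ) ≤ (k:ℝ))]
      have h2 : |q| + (k:ℝ) ≤ (|q| + 1) * (k + 1) := by nlinarith [abs_nonneg q]
      have hC : (0:ℝ) ≤ (|q| + 1) ^ k * (k.factorial : ℝ) := by positivity
      calc |poch q k| * |q + (k:ℝ)| ≤ ((|q| + 1) ^ k * (k.factorial : ℝ)) * ((|q| + 1) * (k + 1)) := by
            apply mul_le_mul ih (h1.trans h2) (abs_nonneg _) hC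
      _ = (|q| + 1) ^ (k+1) * ((k+1).factorial : ℝ) := by
            push_cast [Nat.factorial_succ]; ring

lemma poch_abs_pos {q : ℝ} (hq : ∀ j : ℕ, q + j ≠ 0) (k : ℕ) : 0 < |poch q k| := by
  induction k with
  | zero => simp [poch_zero]
  | succ k ih =>
      rw [poch_succ, abs_mul]
      exact mul_pos ih (abs_pos.mpr (hq k))

lemma poch_lower {q : ℝ} (hq : ∀ j : ℕ, q + j ≠ 0) :
    ∃ m > 0, ∀ k, m ≤ |poch q k| := by
  obtain ⟨N, hN⟩ := exists_nat_ge (1 - q)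
  have hmono : ∀ k, N ≤ k → |poch q N| ≤ |poch q k| := by
    intro k hk
    induction k, hk using Nat.le_induction with
    | base => exact le_rfl
    | succ k hk ih =>
        rw [poch_succ, abs_mul]
        have h1 : (1:ℝ) ≤ q + k := by
          have : (N:ℝ) ≤ k := by exact_mod_cast hk
          linarith
        have h2 : (1:ℝ) ≤ |q + k| := by rw [abs_of_pos (by linarith)]; exact h1
        nlinarith [poch_abs_pos hq N, ih]
  set s : Finset ℕ := Finset.range (N + 1) with hs
  have hne : s.Nonempty := ⟨0, by simp [hs]⟩
  refine ⟨s.inf' hne (fun k => |poch q k|), ?_, ?_⟩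
  · rw [gt_iff_lt, Finset.lt_inf'_iff]
    intro k _
    exact poch_abs_pos hq k
  · intro k
    rcases le_or_gt k N with h | h
    · exact Finset.inf'_le _ (by simp [hs]; omega)
    · exact le_trans (Finset.inf'_le _ (by simp [hs])) (hmono k h.le)
noncomputable def coeff (a₂ b₂ b₃ : ℝ) (k : ℕ) : ℝ :=
  (poch 1 k * poch a₂ k) /
    (poch 2 k * poch b₂ k * poch b₃ k * (Nat.factorial k : ℝ))

noncomputable def bnd (a₂ m : ℝ) (k : ℕ) : ℝ :=
  (1 / m) * ((|a₂| + 1) ^ k / (Nat.factorial k : ℝ))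

lemma coeff_zero (a₂ b₂ b₃ : ℝ) : coeff a₂ b₂ b₃ 0 = 1 := by
  simp [coeff, poch_zero]

lemma bnd_nonneg {a₂ m : ℝ} (hm : 0 < m) (k : ℕ) : 0 ≤ bnd a₂ m k := by
  have h : (0:ℝ) < |a₂| + 1 := by positivity
  rw [bnd]; positivity

lemma bnd_summable (a₂ : ℝ) {m : ℝ} (hm : 0 < m) : Summable (bnd a₂ m) :=
  (Real.summable_pow_div_factorial (|a₂| + 1)).mul_left (1 / m)

lemma abs_coeff_le {a₂ b₂ b₃ m : ℝ} (hb₂1 : 1 ≤ b₂) (hm : 0 < m)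
    (hml : ∀ k, m ≤ |poch b₃ k|) (k : ℕ) :
    |coeff a₂ b₂ b₃ k| ≤ bnd a₂ m k := by
  set C : ℝ := |a₂| + 1 with hC
  have hCpos : (0:ℝ) < C := by rw [hC]; positivity
  have hf : (0:ℝ) < (k.factorial : ℝ) := by positivity
  have h2 : (k.factorial : ℝ) ≤ poch 2 k := poch_ge_factorial (by norm_num) k
  have hB2 : (k.factorial : ℝ) ≤ poch b₂ k := poch_ge_factorial hb₂1 k
  have h2p : (0:ℝ) < poch 2 k := lt_of_lt_of_le hf h2
  have hB2p : (0:ℝ) < poch b₂ k := lt_of_lt_of_le hf hB2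
  have hB3 : m ≤ |poch b₃ k| := hml k
  have hnum : |poch 1 k * poch a₂ k| ≤ (k.factorial : ℝ) * (C ^ k * (k.factorial : ℝ)) := by
    rw [abs_mul, poch_one_eq, abs_of_nonneg hf.le]
    exact mul_le_mul_of_nonneg_left (abs_poch_le a₂ k) hf.le
  have hden : (k.factorial : ℝ) * (k.factorial : ℝ) * (m * (k.factorial : ℝ)) ≤
      |poch 2 k * poch b₂ k * poch b₃ k * (k.factorial : ℝ)| := by
    rw [abs_mul, abs_mul, abs_mul, abs_of_pos h2p, abs_of_pos hB2p, abs_of_pos hf]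
    have : (k.factorial : ℝ) * (k.factorial : ℝ) * (m * (k.factorial : ℝ)) ≤
        poch 2 k * poch b₂ k * (|poch b₃ k| * (k.factorial : ℝ)) := by
      apply mul_le_mul (mul_le_mul h2 hB2 hf.le h2p.le)
        (mul_le_mul_of_nonneg_right hB3 hf.le) (by positivity) (by positivity)
    linarith [this]
  have hdpos : (0:ℝ) < (k.factorial : ℝ) * (k.factorial : ℝ) * (m * (k.factorial : ℝ)) := by
    positivity
  have hmain := div_le_div₀ (by positivity) hnum hdpos hden
  rw [coeff, abs_div]
  refine le_trans hmain (le_of_eq ?_)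
  rw [bnd, ← hC]
  field_simp

set_option maxHeartbeats 1000000 in
lemma hyp_sub_one_bound {a₂ b₂ b₃ m : ℝ} (hb₂1 : 1 ≤ b₂) (hm : 0 < m)
    (hml : ∀ k, m ≤ |poch b₃ k|) {x : ℝ} (hx : |x| ≤ 1) :
    |hyp2F3 1 a₂ 2 b₂ b₃ x - 1| ≤ |x| * ∑' k, bnd a₂ m (k + 1) := by
  have hbsum := bnd_summable a₂ hm
  have hbsum' : Summable (fun k => bnd a₂ m (k + 1)) := (summable_nat_add_iff 1).mpr hbsum
  have hsum : Summable (fun k => coeff a₂ b₂ b₃ k * x ^ k) := by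
    apply Summable.of_norm
    apply hbsum.of_nonneg_of_le (fun k => norm_nonneg _)
    intro k
    rw [Real.norm_eq_abs, abs_mul, abs_pow]
    calc |coeff a₂ b₂ b₃ k| * |x| ^ k ≤ bnd a₂ m k * 1 ^ k := by
          apply mul_le_mul (abs_coeff_le hb₂1 hm hml k)
            (pow_le_pow_left₀ (abs_nonneg x) hx k) (by positivity) (bnd_nonneg hm k)
    _ = bnd a₂ m k := by simp
  have heq : hyp2F3 1 a₂ 2 b₂ b₃ x = ∑' k, coeff a₂ b₂ b₃ k * x ^ k := by
    exact tsum_congr fun k => by rw [coeff]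
  rw [heq, Summable.tsum_eq_zero_add hsum, coeff_zero]
  simp only [pow_zero, one_mul, add_sub_cancel_left]
  have hsum' : Summable (fun k => coeff a₂ b₂ b₃ (k + 1) * x ^ (k + 1)) :=
    (summable_nat_add_iff 1).mpr hsum
  calc |∑' k, coeff a₂ b₂ b₃ (k + 1) * x ^ (k + 1)|
      ≤ ∑' k, |coeff a₂ b₂ b₃ (k + 1) * x ^ (k + 1)| := by
        have h := norm_tsum_le_tsum_norm (f := fun k : ℕ => coeff a₂ b₂ b₃ (k + 1) * x ^ (k + 1))
          (by simpa only [Real.norm_eq_abs] using hsum'.abs)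
        simpa only [Real.norm_eq_abs] using h
    _ ≤ ∑' k, bnd a₂ m (k + 1) * |x| := by
        apply Summable.tsum_le_tsum _ hsum'.abs (hbsum'.mul_right |x|)
        intro k
        rw [abs_mul, abs_pow]
        calc |coeff a₂ b₂ b₃ (k+1)| * |x| ^ (k+1)
            ≤ bnd a₂ m (k+1) * (|x| * 1 ^ k) := by
              rw [pow_succ']
              exact mul_le_mul (abs_coeff_le hb₂1 hm hml (k+1))
                (mul_le_mul_of_nonneg_left (pow_le_pow_left₀ (abs_nonneg x) hx k)
                  (abs_nonneg x)) (by positivity) (bnd_nonneg hm (k+1))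
        _ = bnd a₂ m (k+1) * |x| := by simp
    _ = (∑' k, bnd a₂ m (k + 1)) * |x| := tsum_mul_right
    _ = |x| * ∑' k, bnd a₂ m (k + 1) := mul_comm _ _
/-- Convergence to the local (classical) Laplacian: for every fixed `r`,
the multiplier `m_δ(r)` tends to `-r²` as the nonlocality parameter `δ → 0⁺`. -/
theorem multiplier_local_limit (n : ℕ) (hn : 1 ≤ n) (β : ℝ)
    (hβ : ∀ j : ℕ, β ≠ (n : ℝ) + 4 + 2 * j) (r : ℝ) :
    Tendsto (fun δ : ℝ => multiplier n δ β r) (𝓝[>] 0) (𝓝 (-r ^ 2)) := by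
  have hn1 : (1:ℝ) ≤ (n:ℝ) := by exact_mod_cast hn
  set a₂ : ℝ := ((n : ℝ) + 2 - β) / 2 with ha2
  set b₂ : ℝ := ((n : ℝ) + 2) / 2 with hb2
  set b₃ : ℝ := ((n : ℝ) + 4 - β) / 2 with hb3
  have hb₂1 : (1 : ℝ) ≤ b₂ := by rw [hb2]; linarith
  have hb₃ne : ∀ j : ℕ, b₃ + j ≠ 0 := by
    intro j h
    exact hβ j (by rw [hb3] at h; linarith)
  obtain ⟨m, hm, hml⟩ := poch_lower hb₃ne
  set T : ℝ := ∑' k, bnd a₂ m (k + 1) with hT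
  -- the argument tends to 0
  set g : ℝ → ℝ := fun δ => -(r ^ 2 * δ ^ 2) / 4 with hg
  have hg0 : Tendsto g (𝓝[>] (0:ℝ)) (𝓝 0) := by
    have hc : Continuous g := by rw [hg]; continuity
    have : Tendsto g (𝓝 (0:ℝ)) (𝓝 (g 0)) := hc.tendsto 0
    have hg00 : g 0 = 0 := by simp [hg]
    rw [hg00] at this
    exact this.mono_left nhdsWithin_le_nhds
  have habs : Tendsto (fun δ => |g δ| * T) (𝓝[>] (0:ℝ)) (𝓝 0) := by
    have := hg0.abs.mul_const T
    simpa using this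
  have hev : ∀ᶠ δ in 𝓝[>] (0:ℝ), |g δ| ≤ 1 := by
    have h1 : ∀ᶠ y in 𝓝 (0:ℝ), |y| < 1 := by
      apply eventually_nhds_iff.mpr
      exact ⟨Set.Ioo (-1) 1, fun y hy => abs_lt.mpr ⟨hy.1, hy.2⟩, isOpen_Ioo, by norm_num⟩
    exact (hg0.eventually h1).mono (fun δ h => h.le)
  have hhyp : Tendsto (fun δ => hyp2F3 1 a₂ 2 b₂ b₃ (g δ)) (𝓝[>] (0:ℝ)) (𝓝 1) := by
    rw [tendsto_iff_norm_sub_tendsto_zero]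
    apply squeeze_zero' (Eventually.of_forall (fun δ => norm_nonneg _))
      (hev.mono (fun δ h => ?_)) habs
    simpa [Real.norm_eq_abs] using hyp_sub_one_bound hb₂1 hm hml h
  have hfinal : Tendsto (fun δ : ℝ => -r ^ 2 * hyp2F3 1 a₂ 2 b₂ b₃ (g δ)) (𝓝[>] (0:ℝ))
      (𝓝 (-r ^ 2 * 1)) := hhyp.const_mul _
  rw [mul_one] at hfinal
  have hmul : (fun δ : ℝ => multiplier n δ β r)
      = fun δ : ℝ => -r ^ 2 * hyp2F3 1 a₂ 2 b₂ b₃ (g δ) := by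
    funext δ
    rw [multiplier, ha2, hb2, hb3, hg]
  rw [hmul]
  exact hfinal
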